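/- Let σ, τ be i.i.d. [-1,1]-valued, ψ(u,v,λ) and φ(u,v) as above. Then ψ(u,v,λ) ≤ ψ(u,v,0) + λ·(∂_u φ(u,v))² + 2λ² for all λ ≥ 0. -/

import Mathlib

set_option autoImplicit false

open MeasureTheory ProbabilityTheory Real

/-!
Write `g x = u x + v x²`, let `ν` be the law of `σ` and `ρ = ν.tilted g` the normalized
measure `e^{g(x)} ν(dx)`. Then `ψ(u,v,λ) - ψ(u,v,0) = log ∫∫ e^{λxy} ρ(dx) ρ(dy)` and
`∂_u φ(u,v) = m`, the mean of `ρ`. Since `ρ` lives on `[-1,1]`, Hoeffding's lemma bounds the inner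
integral by `e^{λxm + λ²/2}` and then the outer one by `e^{λm² + λ²m²/2 + λ²/2} ≤ e^{λm² + λ²}`.
-/

theorem Continuous.integrable_of_ae_mem_compact {X E : Type*} [MeasurableSpace X]
    [TopologicalSpace X] [OpensMeasurableSpace X] [T2Space X] [NormedAddCommGroup E]
    {μ : Measure X} [IsFiniteMeasure μ] {f : X → E} {K : Set X} (hf : Continuous f)
    (hK : IsCompact K) (hμK : ∀ᵐ x ∂μ, x ∈ K) : Integrable f μ := by
  rw [← Measure.restrict_eq_self_of_ae_mem hμK]
  exact hf.continuousOn.integrableOn_compact hK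

theorem integral_exp_mul_le_of_ae_mem_Icc {ρ : Measure ℝ} [IsProbabilityMeasure ρ] {a b : ℝ}
    (hρ : ∀ᵐ x ∂ρ, x ∈ Set.Icc a b) (t : ℝ) :
    ∫ x, exp (t * x) ∂ρ ≤ exp (t * ∫ x, x ∂ρ + (b - a) ^ 2 * t ^ 2 / 8) := by
  have h := (hasSubgaussianMGF_of_mem_Icc aemeasurable_id hρ).mgf_le t
  have hc : (((‖b - a‖₊ / 2) ^ 2 : NNReal) : ℝ) = (b - a) ^ 2 / 4 := by
    simp [div_pow, sq_abs]; ring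
  have hmgf : mgf (fun x => id x - ∫ x, id x ∂ρ) ρ t
      = exp (-(t * ∫ x, x ∂ρ)) * ∫ x, exp (t * x) ∂ρ := by
    rw [mgf, ← integral_const_mul]
    congr with x
    rw [← exp_add]; simp only [id]; ring_nf
  rw [hmgf, hc, ← le_div_iff₀' (exp_pos _), ← exp_sub] at h
  exact h.trans_eq (by ring_nf)

theorem integral_integral_exp_mul_mul_le {ρ : Measure ℝ} [IsProbabilityMeasure ρ]
    (hρ : ∀ᵐ x ∂ρ, x ∈ Set.Icc (-1) 1) (l : ℝ) :
    ∫ x, ∫ y, exp (l * x * y) ∂ρ ∂ρ ≤ exp (l * (∫ x, x ∂ρ) ^ 2 + l ^ 2) := by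
  set m := ∫ x, x ∂ρ
  have hm : m ^ 2 ≤ 1 := sq_le_one_iff_abs_le_one _ |>.2 <| abs_le.2 <|
    (convex_Icc (-1 : ℝ) 1).integral_mem isClosed_Icc hρ
      (Integrable.of_mem_Icc (-1) 1 aemeasurable_id hρ)
  have hinner : ∀ᵐ x ∂ρ, ∫ y, exp (l * x * y) ∂ρ ≤ exp (l ^ 2 / 2) * exp (l * m * x) := by
    filter_upwards [hρ] with x ⟨hx₁, hx₂⟩
    calc ∫ y, exp (l * x * y) ∂ρ ≤ exp (l * x * m + (1 - -1) ^ 2 * (l * x) ^ 2 / 8) :=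
          integral_exp_mul_le_of_ae_mem_Icc hρ (l * x)
      _ ≤ exp (l ^ 2 / 2) * exp (l * m * x) := by
          rw [← exp_add, exp_le_exp]
          nlinarith [mul_le_mul_of_nonneg_left (show x ^ 2 ≤ 1 by nlinarith) (sq_nonneg l)]
  calc ∫ x, ∫ y, exp (l * x * y) ∂ρ ∂ρ ≤ ∫ x, exp (l ^ 2 / 2) * exp (l * m * x) ∂ρ :=
        integral_mono_of_nonneg (.of_forall fun _ => integral_nonneg fun _ => (exp_pos _).le)
          ((integrable_exp_mul_of_mem_Icc aemeasurable_id hρ).const_mul _) hinner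
    _ = exp (l ^ 2 / 2) * ∫ x, exp (l * m * x) ∂ρ := integral_const_mul _ _
    _ ≤ exp (l ^ 2 / 2) * exp (l * m * m + (1 - -1) ^ 2 * (l * m) ^ 2 / 8) := by
        gcongr; exact integral_exp_mul_le_of_ae_mem_Icc hρ _
    _ ≤ exp (l * m ^ 2 + l ^ 2) := by
        rw [← exp_add, exp_le_exp]; nlinarith [mul_le_mul_of_nonneg_left hm (sq_nonneg l)]

theorem integral_integral_tilted {α : Type*} [MeasurableSpace α] (ν : Measure α) (g : α → ℝ)
    (F : α → α → ℝ) :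
    ∫ x, ∫ y, F x y ∂ν.tilted g ∂ν.tilted g
      = (∫ x, ∫ y, exp (g x + g y) * F x y ∂ν ∂ν) / (∫ x, exp (g x) ∂ν) ^ 2 := by
  simp_rw [integral_tilted, smul_eq_mul, ← integral_div]
  congr 1 with x
  rw [← integral_const_mul]
  congr 1 with y
  rw [exp_add]; ring

theorem deriv_log_integral_exp_mul_add {Ω : Type*} [MeasurableSpace Ω] {μ : Measure Ω} [NeZero μ]
    {X h : Ω → ℝ} (hint : ∀ t, Integrable (fun ω => exp (t * X ω + h ω)) μ) (u : ℝ) :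
    deriv (fun t => log (∫ ω, exp (t * X ω + h ω) ∂μ)) u
      = ∫ ω, X ω ∂(μ.tilted fun ω => u * X ω + h ω) := by
  have hZ : Integrable (fun ω => exp (h ω)) μ := by simpa using hint 0
  have hexp_add : ∀ t ω, exp (h ω) * exp (t * X ω) = exp (t * X ω + h ω) := fun t ω => by
    rw [← exp_add, add_comm]
  have hset : integrableExpSet X (μ.tilted h) = Set.univ := by
    ext t
    simp [integrableExpSet, integrable_tilted_iff hZ, hexp_add, hint]
  have hcgf : (fun t => log (∫ ω, exp (t * X ω + h ω) ∂μ))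
      = fun t => cgf X (μ.tilted h) t + log (∫ ω, exp (h ω) ∂μ) := by
    funext t
    rw [cgf, mgf, integral_exp_tilted,
      log_div (integral_exp_pos (by simpa [add_comm] using hint t)).ne' (integral_exp_pos hZ).ne']
    simp only [Pi.add_apply, add_comm (h _), sub_add_cancel]
  rw [hcgf, deriv_add_const, ← integral_tilted_mul_self (by simp [hset]), tilted_tilted hZ]
  congr 2 with ω
  exact add_comm _ _

theorem log_integral_prod_exp_add_mul_le {ν : Measure ℝ} [IsProbabilityMeasure ν]
    (hν : ∀ᵐ x ∂ν, x ∈ Set.Icc (-1) 1) {g : ℝ → ℝ} (hg : Continuous g) (l : ℝ) :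
    log (∫ p, exp (g p.1 + g p.2 + l * p.1 * p.2) ∂ν.prod ν)
      ≤ log (∫ p, exp (g p.1 + g p.2) ∂ν.prod ν) + l * (∫ x, x ∂ν.tilted g) ^ 2 + l ^ 2 := by
  have hexp : Integrable (fun x => exp (g x)) ν :=
    (continuous_exp.comp hg).integrable_of_ae_mem_compact isCompact_Icc hν
  have hZ : 0 < ∫ x, exp (g x) ∂ν := integral_exp_pos hexp
  have : IsProbabilityMeasure (ν.tilted g) := isProbabilityMeasure_tilted hexp
  have hρ : ∀ᵐ x ∂ν.tilted g, x ∈ Set.Icc (-1) 1 := (tilted_absolutelyContinuous ν g).ae_le hν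
  have hint : ∀ c : ℝ,
      Integrable (fun p : ℝ × ℝ => exp (g p.1 + g p.2 + c * p.1 * p.2)) (ν.prod ν) := fun c =>
    Continuous.integrable_of_ae_mem_compact (by fun_prop) (isCompact_Icc.prod isCompact_Icc)
      ((Measure.quasiMeasurePreserving_fst.ae hν).and (Measure.quasiMeasurePreserving_snd.ae hν))
  have hfactor : ∀ c : ℝ, ∫ p, exp (g p.1 + g p.2 + c * p.1 * p.2) ∂ν.prod ν
      = (∫ x, exp (g x) ∂ν) ^ 2 * ∫ x, ∫ y, exp (c * x * y) ∂ν.tilted g ∂ν.tilted g := by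
    intro c
    rw [integral_integral_tilted, mul_div_cancel₀ _ (by positivity), integral_prod _ (hint c)]
    simp only [exp_add]
  have hfactor₀ : ∫ p, exp (g p.1 + g p.2) ∂ν.prod ν = (∫ x, exp (g x) ∂ν) ^ 2 := by
    simpa using hfactor 0
  rw [hfactor₀]
  calc log (∫ p, exp (g p.1 + g p.2 + l * p.1 * p.2) ∂ν.prod ν)
      ≤ log ((∫ x, exp (g x) ∂ν) ^ 2 * exp (l * (∫ x, x ∂ν.tilted g) ^ 2 + l ^ 2)) := by
        refine log_le_log (integral_exp_pos (hint l)) ?_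
        rw [hfactor]
        gcongr
        exact integral_integral_exp_mul_mul_le hρ l
    _ = log ((∫ x, exp (g x) ∂ν) ^ 2) + l * (∫ x, x ∂ν.tilted g) ^ 2 + l ^ 2 := by
        rw [log_mul (by positivity) (exp_pos _).ne', log_exp, add_assoc]

theorem psi_upper_bound_general
    {Ω : Type*} [MeasurableSpace Ω] (μ : Measure Ω) [IsProbabilityMeasure μ]
    (σ τ : Ω → ℝ) (hσ : Measurable σ) (hτ : Measurable τ)
    (hbdσ : ∀ ω, σ ω ∈ Set.Icc (-1 : ℝ) 1)
    (hindep : IndepFun σ τ μ) (hid : Measure.map σ μ = Measure.map τ μ)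
    (φ : ℝ → ℝ → ℝ)
    (hφ : ∀ u v, φ u v = Real.log (∫ ω, Real.exp (u * σ ω + v * (σ ω) ^ 2) ∂μ))
    (ψ : ℝ → ℝ → ℝ → ℝ)
    (hψ : ∀ u v l, ψ u v l = Real.log (∫ ω,
      Real.exp (u * (σ ω + τ ω) + v * ((σ ω) ^ 2 + (τ ω) ^ 2) + l * σ ω * τ ω) ∂μ)) :
    ∀ (u v l : ℝ), 0 ≤ l →
      ψ u v l ≤ ψ u v 0 + l * (deriv (fun u' => φ u' v) u) ^ 2 + 2 * l ^ 2 := by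
  intro u v l _
  set ν := μ.map σ
  have : IsProbabilityMeasure ν := Measure.isProbabilityMeasure_map hσ.aemeasurable
  have hν : ∀ᵐ x ∂ν, x ∈ Set.Icc (-1) 1 :=
    (ae_map_iff hσ.aemeasurable measurableSet_Icc).2 (.of_forall hbdσ)
  have hjoint : μ.map (fun ω => (σ ω, τ ω)) = ν.prod ν := by
    rw [(indepFun_iff_map_prod_eq_prod_map_map hσ.aemeasurable hτ.aemeasurable).1 hindep, ← hid]
  have hψν : ∀ c, ψ u v c = log (∫ p, exp ((u * p.1 + v * p.1 ^ 2) + (u * p.2 + v * p.2 ^ 2)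
      + c * p.1 * p.2) ∂ν.prod ν) := by
    intro c
    rw [hψ, ← hjoint, integral_map (hσ.aemeasurable.prodMk hτ.aemeasurable) (by fun_prop)]
    congr 2 with ω
    ring_nf
  have hφν : deriv (fun u' => φ u' v) u = ∫ x, x ∂ν.tilted fun x => u * x + v * x ^ 2 := by
    have hint : ∀ t, Integrable (fun x => exp (t * x + v * x ^ 2)) ν := fun t =>
      Continuous.integrable_of_ae_mem_compact (by fun_prop) isCompact_Icc hν
    have hmap : ∀ t, ∫ ω, exp (t * σ ω + v * σ ω ^ 2) ∂μ = ∫ x, exp (t * x + v * x ^ 2) ∂ν :=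
      fun t => (integral_map hσ.aemeasurable
        (by fun_prop : Continuous fun x : ℝ => exp (t * x + v * x ^ 2)).aestronglyMeasurable).symm
    simp_rw [hφ, hmap]
    exact deriv_log_integral_exp_mul_add hint u
  have key := log_integral_prod_exp_add_mul_le hν (g := fun x => u * x + v * x ^ 2) (by fun_prop) l
  rw [hψν, hψν 0, hφν]
  simp only [zero_mul, add_zero]
  linarith [sq_nonneg l]

/-- For i.i.d. spins `σ, τ` with values in `[-1,1]`,
`ψ(u,v,λ) ≤ ψ(u,v,0) + λ·(∂_u φ(u,v))² + 2λ²` for all `λ ≥ 0`. -/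
theorem psi_upper_bound
    {Ω : Type*} [MeasurableSpace Ω] (μ : Measure Ω) [IsProbabilityMeasure μ]
    (σ τ : Ω → ℝ) (hσ : Measurable σ) (hτ : Measurable τ)
    (hbdσ : ∀ ω, σ ω ∈ Set.Icc (-1 : ℝ) 1) (hbdτ : ∀ ω, τ ω ∈ Set.Icc (-1 : ℝ) 1)
    (hindep : IndepFun σ τ μ) (hid : Measure.map σ μ = Measure.map τ μ)
    (φ : ℝ → ℝ → ℝ)
    (hφ : ∀ u v, φ u v = Real.log (∫ ω, Real.exp (u * σ ω + v * (σ ω) ^ 2) ∂μ))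
    (ψ : ℝ → ℝ → ℝ → ℝ)
    (hψ : ∀ u v l, ψ u v l = Real.log (∫ ω,
      Real.exp (u * (σ ω + τ ω) + v * ((σ ω) ^ 2 + (τ ω) ^ 2) + l * σ ω * τ ω) ∂μ)) :
    ∀ (u v l : ℝ), 0 ≤ l →
      ψ u v l ≤ ψ u v 0 + l * (deriv (fun u' => φ u' v) u) ^ 2 + 2 * l ^ 2 :=
  psi_upper_bound_general μ σ τ hσ hτ hbdσ hindep hid φ hφ ψ hψ
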